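/- arXiv:2104.12658 — 3 statements merged into one kernel-verified Lean document; each statement's English description precedes it below -/
import Mathlib

section
/- Trace formula for commutators with derivation pairs: let E be a finite free R-module, u a derivation pair over h ∈ Der_K(R) on E, and B an R-linear endomorphism of E. If C is an R-linear endomorphism of E whose underlying K-linear map equals u∘B − B∘u, then Tr(C) = h(Tr(B)), where Tr denotes the trace of R-linear endomorphisms of E. -/
/-- A `K`-linear endomorphism `u` of the `R`-module `E` is a *derivation pair* over the
`K`-linear derivation `h : R → R` if `u (f • e) = f • u e + (h f) • e` for all `f ∈ R`
and `e ∈ E`. -/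
def IsDerivPair {K R E : Type*} [Field K] [CommRing R] [Algebra K R]
    [AddCommGroup E] [Module R E] [Module K E] [IsScalarTower K R E]
    (h : Derivation K R R) (u : E →ₗ[K] E) : Prop :=
  ∀ (f : R) (e : E), u (f • e) = f • u e + (h f) • e

/-- Trace formula for commutators with derivation pairs: let `E` be a
finite free `R`-module, `u` a derivation pair over `h ∈ Der_K(R)` on `E`, and `B` an
`R`-linear endomorphism of `E`. If `C` is an `R`-linear endomorphism of `E` whose
underlying `K`-linear map equals `u∘B − B∘u`, then `Tr(C) = h(Tr(B))`. -/
theorem trace_commutator_derivPair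
    {K R E : Type*} [Field K] [CharZero K] [CommRing R] [Algebra K R]
    [AddCommGroup E] [Module R E] [Module K E] [IsScalarTower K R E]
    [Module.Free R E] [Module.Finite R E]
    (h : Derivation K R R) (u : E →ₗ[K] E) (hu : IsDerivPair h u)
    (B C : E →ₗ[R] E) (hC : ∀ e : E, C e = u (B e) - B (u e)) :
    LinearMap.trace R E C = h (LinearMap.trace R E B) := by
  classical
  set b := Module.Free.chooseBasis R E with hb
  rw [LinearMap.trace_eq_matrix_trace R b C, LinearMap.trace_eq_matrix_trace R b B,
    Matrix.trace, Matrix.trace]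
  simp only [Matrix.diag, LinearMap.toMatrix_apply]
  have key : ∀ i, b.repr (C (b i)) i
      = h (b.repr (B (b i)) i)
        + ∑ j, b.repr (B (b i)) j * b.repr (u (b j)) i
        - ∑ j, b.repr (u (b i)) j * b.repr (B (b j)) i := by
    intro i
    have h3 : u (B (b i))
        = ∑ j, (b.repr (B (b i)) j • u (b j) + h (b.repr (B (b i)) j) • b j) := by
      conv_lhs => rw [← b.sum_repr (B (b i))]
      rw [map_sum]
      exact Finset.sum_congr rfl fun j _ => hu _ _
    have h4 : B (u (b i)) = ∑ j, b.repr (u (b i)) j • B (b j) := by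
      conv_lhs => rw [← b.sum_repr (u (b i))]
      rw [map_sum]; simp
    rw [hC, map_sub, h3, h4, map_sum, map_sum]
    simp only [map_add, map_smul, Finsupp.sub_apply, Finsupp.add_apply, Finsupp.smul_apply,
      smul_eq_mul, Finset.sum_apply', b.repr_self, Finsupp.single_apply,
      mul_ite, mul_one, mul_zero, Finset.sum_add_distrib, Finset.sum_ite_eq',
      Finset.mem_univ, if_true]
    ring
  calc ∑ i, b.repr (C (b i)) i
      = ∑ i, (h (b.repr (B (b i)) i)
        + ∑ j, b.repr (B (b i)) j * b.repr (u (b j)) i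
        - ∑ j, b.repr (u (b i)) j * b.repr (B (b j)) i) :=
        Finset.sum_congr rfl fun i _ => key i
    _ = ∑ i, h (b.repr (B (b i)) i) := by
        rw [Finset.sum_sub_distrib, Finset.sum_add_distrib,
          Finset.sum_comm (f := fun i j => b.repr (B (b i)) j * b.repr (u (b j)) i)]
        simp [mul_comm]
    _ = h (∑ i, b.repr (B (b i)) i) := (map_sum h _ _).symm
end

section
/- Cyclicity of the trace form induced by a representation (affine, degree-zero version of Lemma 2.6 of the paper): let (A, ρ) be affine Lie algebroid data over R, E a finite free R-module, and θ : A → End_K(E) a K-linear morphism of Lie algebras (End_K(E) with the commutator bracket) such that, for every a ∈ A, θ(a) is a derivation pair over ρ(a). Then for every x ∈ ker ρ the endomorphism θ(x) is R-linear, and for all a ∈ A and x, y ∈ ker ρ, denoting by X, Y, Xₐ, Yₐ the R-linear endomorphisms of E underlying θ(x), θ(y), θ(⁅a,x⁆), θ(⁅a,y⁆), one has Tr(Xₐ∘Y) + Tr(X∘Yₐ) = ρ(a)(Tr(X∘Y)), where Tr denotes the trace of R-linear endomorphisms of E. -/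
/-!
Write `u` for `θ a`, a derivation pair over `D = ρ a`, and `M = X ∘ Y`. Since `θ` is a Lie
morphism, `Xa ∘ Y + X ∘ Ya = u ∘ M - M ∘ u`. In a basis of `E` the matrix of this commutator
is `[Ω, A] + D(A)`, where `A` is the matrix of `M`, `Ω` the matrix of the columns `u (b j)`,
and `D(A)` is `D` applied entrywise; the trace of `[Ω, A]` vanishes, leaving `D (Tr M)`.
-/

open Module

def IsDerivationPair {R E F G : Type*} [CommRing R] [AddCommGroup E] [Module R E]
    [FunLike F R R] [FunLike G E E] (D : F) (u : G) : Prop :=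
  ∀ (f : R) (e : E), u (f • e) = f • u e + D f • e

namespace IsDerivationPair

open LinearMap

variable {R E ι F G : Type*} [CommRing R] [AddCommGroup E] [Module R E] [Fintype ι]
  [FunLike F R R] [FunLike G E E] [AddMonoidHomClass G E E] {D : F} {u : G}

theorem repr_apply (hu : IsDerivationPair D u) (b : Basis ι R E) (e : E) (j : ι) :
    b.repr (u e) j = ∑ i, b.toMatrix (u ∘ b) j i * b.repr e i + D (b.repr e j) := by
  classical
  unfold IsDerivationPair at hu
  have hsum : u e = ∑ i, (b.repr e i • u (b i) + D (b.repr e i) • b i) := by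
    simp_rw [← hu, ← map_sum, b.sum_repr]
  simp [hsum, Finsupp.single_apply, Basis.toMatrix_apply, mul_comm, Finset.sum_add_distrib]

theorem toMatrix_commutator [DecidableEq ι] (hu : IsDerivationPair D u) (b : Basis ι R E)
    (M S : E →ₗ[R] E) (hS : ∀ e, S e = u (M e) - M (u e)) :
    toMatrix b b S = b.toMatrix (u ∘ b) * toMatrix b b M - toMatrix b b M * b.toMatrix (u ∘ b)
      + (toMatrix b b M).map D := by
  ext i j
  simp only [toMatrix_apply, hS, map_sub, Finsupp.sub_apply, hu.repr_apply b (M (b j)),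
    Matrix.add_apply, Matrix.sub_apply, Matrix.mul_apply, Matrix.map_apply]
  rw [← toMatrix_mulVec_repr b b M (u (b j))]
  simp only [Matrix.mulVec, dotProduct, toMatrix_apply, Basis.toMatrix_apply, Function.comp_apply]
  abel

theorem trace_commutator [AddMonoidHomClass F R R] [Free R E] [Module.Finite R E]
    (hu : IsDerivationPair D u) (M S : E →ₗ[R] E) (hS : ∀ e, S e = u (M e) - M (u e)) :
    trace R E S = D (trace R E M) := by
  classical
  let b := Free.chooseBasis R E
  rw [trace_eq_matrix_trace R b, trace_eq_matrix_trace R b, hu.toMatrix_commutator b M S hS,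
    Matrix.trace_add, Matrix.trace_sub, Matrix.trace_mul_comm, sub_self, zero_add,
    AddMonoidHom.map_trace]

end IsDerivationPair

theorem trace_form_of_representation_cyclic_general
    {K R A E : Type*} [Field K] [CommRing R] [Algebra K R]
    [LieRing A] [LieAlgebra K A] [Module R A]
    [AddCommGroup E] [Module R E] [Module K E]
    [Module.Free R E] [Module.Finite R E]
    (ρ : A →ₗ[R] Derivation K R R)
    (θ : A →ₗ[K] (E →ₗ[K] E))
    (hθmor : ∀ a b : A, θ ⁅a, b⁆ = θ a ∘ₗ θ b - θ b ∘ₗ θ a)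
    (hθpair : ∀ (a : A) (f : R) (e : E), θ a (f • e) = f • θ a e + (ρ a f) • e)
    (a x y : A) (hx : ρ x = 0)
    (X Y Xa Ya : E →ₗ[R] E)
    (hX : ∀ e : E, X e = θ x e) (hY : ∀ e : E, Y e = θ y e)
    (hXa : ∀ e : E, Xa e = θ ⁅a, x⁆ e) (hYa : ∀ e : E, Ya e = θ ⁅a, y⁆ e) :
    (∀ (f : R) (e : E), θ x (f • e) = f • θ x e) ∧
      LinearMap.trace R E (Xa ∘ₗ Y) + LinearMap.trace R E (X ∘ₗ Ya)
        = ρ a (LinearMap.trace R E (X ∘ₗ Y)) := by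
  refine ⟨fun f e => by simp [hθpair, hx], ?_⟩
  rw [← map_add]
  refine IsDerivationPair.trace_commutator (hθpair a) _ _ fun e => ?_
  simp only [LinearMap.add_apply, LinearMap.comp_apply, hX, hY, hXa, hYa, hθmor,
    LinearMap.sub_apply, map_sub]
  abel

/-- Cyclicity of the trace form induced by a representation: let `(A, ρ)`
be affine Lie algebroid data over `R`, `E` a finite free `R`-module, and
`θ : A → End_K(E)` a `K`-linear morphism of Lie algebras (`End_K(E)` with the
commutator bracket) such that, for every `a ∈ A`, `θ a` is a derivation pair over
`ρ a`. Then for every `x ∈ ker ρ` the endomorphism `θ x` is `R`-linear, and for all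
`a ∈ A`, `x, y ∈ ker ρ`, denoting by `X, Y, Xₐ, Yₐ` the `R`-linear endomorphisms of `E`
underlying `θ x`, `θ y`, `θ ⁅a,x⁆`, `θ ⁅a,y⁆`, one has
`Tr(Xₐ∘Y) + Tr(X∘Yₐ) = ρ a (Tr(X∘Y))`. -/
theorem trace_form_of_representation_cyclic
    {K R A E : Type*} [Field K] [CharZero K] [CommRing R] [Algebra K R]
    [LieRing A] [LieAlgebra K A] [Module R A] [IsScalarTower K R A]
    [AddCommGroup E] [Module R E] [Module K E] [IsScalarTower K R E]
    [Module.Free R E] [Module.Finite R E]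
    (ρ : A →ₗ[R] Derivation K R R)
    (hmor : ∀ a b : A, ρ ⁅a, b⁆ = ⁅ρ a, ρ b⁆)
    (hleib : ∀ (a b : A) (f : R), ⁅a, f • b⁆ = f • ⁅a, b⁆ + (ρ a f) • b)
    (θ : A →ₗ[K] (E →ₗ[K] E))
    (hθmor : ∀ a b : A, θ ⁅a, b⁆ = θ a ∘ₗ θ b - θ b ∘ₗ θ a)
    (hθpair : ∀ (a : A) (f : R) (e : E), θ a (f • e) = f • θ a e + (ρ a f) • e)
    (a x y : A) (hx : ρ x = 0) (hy : ρ y = 0)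
    (X Y Xa Ya : E →ₗ[R] E)
    (hX : ∀ e : E, X e = θ x e) (hY : ∀ e : E, Y e = θ y e)
    (hXa : ∀ e : E, Xa e = θ ⁅a, x⁆ e) (hYa : ∀ e : E, Ya e = θ ⁅a, y⁆ e) :
    (∀ (f : R) (e : E), θ x (f • e) = f • θ x e) ∧
      LinearMap.trace R E (Xa ∘ₗ Y) + LinearMap.trace R E (X ∘ₗ Ya)
        = ρ a (LinearMap.trace R E (X ∘ₗ Y)) :=
  trace_form_of_representation_cyclic_general ρ θ hθmor hθpair a x y hx X Y Xa Ya hX hY hXa hYa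
end

section
/- Cyclicity of the Killing-type form (affine, degree-zero version of Example 2.4 of the paper): let (A, ρ) be affine Lie algebroid data over R such that L := ker ρ is a finite free R-module. For x ∈ L let ad x denote the R-linear endomorphism y ↦ ⁅x, y⁆ of L, and define ⟨x, y⟩ := Tr((ad x)∘(ad y)), where Tr is the trace of R-linear endomorphisms of L. Then for all a ∈ A and x, y ∈ L one has ⟨⁅a,x⁆, y⟩ + ⟨x, ⁅a,y⁆⟩ = ρ(a)(⟨x, y⟩). -/
/-!
For `a ∈ A`, the bracket `D = ⁅a, -⁆` preserves `L = ker ρ` and is a first-order operator on it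
with symbol `ρ a`: `D (f • z) = f • D z + ρ a f • z`. By the Jacobi identity,
`ad ⁅a,x⁆ ∘ ad y + ad x ∘ ad ⁅a,y⁆ = D ∘ T - T ∘ D` with `T = ad x ∘ ad y`. In a basis, `D` acts as
`ρ a` on coordinates plus a matrix `Γ`, so `D ∘ T - T ∘ D` has matrix `(ρ a)(T) + ⁅Γ, T⁆`; the
commutator is traceless and `ρ a` commutes with the trace.
-/

open Matrix

namespace Module.Basis

variable {ι R M : Type*} [Fintype ι] [DecidableEq ι] [CommRing R] [AddCommGroup M] [Module R M]
  (b : Basis ι R M) {δ : R →+ R} {D : M →+ M}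

/-- The Christoffel symbols of `D` in the basis `b`. -/
noncomputable def connectionMatrix (D : M →+ M) : Matrix ι ι R :=
  of fun k i => b.repr (D (b i)) k

theorem repr_apply_of_leibniz (hD : ∀ (f : R) (z : M), D (f • z) = f • D z + δ f • z)
    (z : M) (k : ι) :
    b.repr (D z) k = δ (b.repr z k) + (b.connectionMatrix D *ᵥ b.repr z) k := by
  conv_lhs => rw [← b.sum_repr z, map_sum]
  simp only [hD, map_sum, map_add, map_smul, Finsupp.coe_finsetSum, Finset.sum_apply,
    Finsupp.coe_add, Pi.add_apply, Finsupp.coe_smul, Pi.smul_apply, smul_eq_mul,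
    Finset.sum_add_distrib, b.repr_self_apply, mul_ite, mul_one, mul_zero, Finset.sum_ite_eq',
    Finset.mem_univ, if_true, mulVec, dotProduct, connectionMatrix, of_apply]
  rw [add_comm]
  simp only [mul_comm]

theorem toMatrix_eq_of_leibniz (hD : ∀ (f : R) (z : M), D (f • z) = f • D z + δ f • z)
    (T S : M →ₗ[R] M) (hS : ∀ z, S z = D (T z) - T (D z)) :
    LinearMap.toMatrix b b S = (LinearMap.toMatrix b b T).map δ
      + b.connectionMatrix D * LinearMap.toMatrix b b T
      - LinearMap.toMatrix b b T * b.connectionMatrix D := by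
  ext k j
  have hTD : b.repr (T (D (b j))) k = (LinearMap.toMatrix b b T * b.connectionMatrix D) k j := by
    rw [← LinearMap.toMatrix_mulVec_repr b b T, mul_apply, mulVec, dotProduct]
    rfl
  rw [LinearMap.toMatrix_apply, hS, map_sub, Finsupp.sub_apply, hTD, b.repr_apply_of_leibniz hD]
  simp [mul_apply, mulVec, dotProduct, LinearMap.toMatrix_apply, connectionMatrix]

end Module.Basis

theorem LinearMap.trace_commutator_eq_of_leibniz {R M : Type*} [CommRing R] [AddCommGroup M]
    [Module R M] [Module.Free R M] [Module.Finite R M] {δ : R →+ R} {D : M →+ M}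
    (hD : ∀ (f : R) (z : M), D (f • z) = f • D z + δ f • z)
    (T S : M →ₗ[R] M) (hS : ∀ z, S z = D (T z) - T (D z)) :
    LinearMap.trace R M S = δ (LinearMap.trace R M T) := by
  classical
  let b := Module.Free.chooseBasis R M
  rw [LinearMap.trace_eq_matrix_trace R b, LinearMap.trace_eq_matrix_trace R b,
    b.toMatrix_eq_of_leibniz hD T S hS, Matrix.trace_sub, Matrix.trace_add,
    Matrix.trace_mul_comm, add_sub_cancel_right, AddMonoidHom.map_trace]

section LieAlgebroid

variable {K R A : Type*} [CommRing K] [CommRing R] [Algebra K R] [LieRing A] [Module R A]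
  (ρ : A →ₗ[R] Derivation K R R) (hmor : ∀ a b : A, ρ ⁅a, b⁆ = ⁅ρ a, ρ b⁆)

include hmor in
theorem lie_mem_ker_of_mem_ker {a z : A} (hz : z ∈ LinearMap.ker ρ) :
    ⁅a, z⁆ ∈ LinearMap.ker ρ := by
  rw [LinearMap.mem_ker] at hz ⊢
  rw [hmor, hz, lie_zero]

def kerAd (a : A) : LinearMap.ker ρ →+ LinearMap.ker ρ where
  toFun z := ⟨⁅a, (z : A)⁆, lie_mem_ker_of_mem_ker ρ hmor z.2⟩
  map_zero' := Subtype.ext (lie_zero a)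
  map_add' z w := Subtype.ext (lie_add a (z : A) w)

theorem kerAd_smul (hleib : ∀ (a b : A) (f : R), ⁅a, f • b⁆ = f • ⁅a, b⁆ + (ρ a f) • b)
    (a : A) (f : R) (z : LinearMap.ker ρ) :
    kerAd ρ hmor a (f • z) = f • kerAd ρ hmor a z + (ρ a f) • z :=
  Subtype.ext (hleib a z f)

end LieAlgebroid

theorem killing_form_cyclic_general
    {K R A : Type*} [Field K] [CommRing R] [Algebra K R]
    [LieRing A] [Module R A]
    (ρ : A →ₗ[R] Derivation K R R)
    (hmor : ∀ a b : A, ρ ⁅a, b⁆ = ⁅ρ a, ρ b⁆)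
    (hleib : ∀ (a b : A) (f : R), ⁅a, f • b⁆ = f • ⁅a, b⁆ + (ρ a f) • b)
    [Module.Free R (LinearMap.ker ρ)] [Module.Finite R (LinearMap.ker ρ)]
    (adm : LinearMap.ker ρ → (LinearMap.ker ρ →ₗ[R] LinearMap.ker ρ))
    (hadm : ∀ x y : LinearMap.ker ρ, ((adm x y : LinearMap.ker ρ) : A) = ⁅(x : A), (y : A)⁆)
    (a : A) (x y ax ay : LinearMap.ker ρ)
    (hax : (ax : A) = ⁅a, (x : A)⁆) (hay : (ay : A) = ⁅a, (y : A)⁆) :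
    LinearMap.trace R (LinearMap.ker ρ) (adm ax ∘ₗ adm y)
      + LinearMap.trace R (LinearMap.ker ρ) (adm x ∘ₗ adm ay)
      = ρ a (LinearMap.trace R (LinearMap.ker ρ) (adm x ∘ₗ adm y)) := by
  have hcomm : ∀ z, (adm ax ∘ₗ adm y + adm x ∘ₗ adm ay) z
      = kerAd ρ hmor a ((adm x ∘ₗ adm y) z) - (adm x ∘ₗ adm y) (kerAd ρ hmor a z) := by
    intro z
    apply Subtype.ext
    simp only [LinearMap.add_apply, LinearMap.comp_apply, Submodule.coe_add,
      Submodule.coe_sub, hadm, hax, hay, kerAd, AddMonoidHom.coe_mk, ZeroHom.coe_mk]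
    rw [leibniz_lie a (x : A), leibniz_lie a (y : A), lie_add]
    abel
  rw [← map_add]
  exact LinearMap.trace_commutator_eq_of_leibniz (δ := (ρ a : R →+ R))
    (kerAd_smul ρ hmor hleib a) _ _ hcomm

/-- Cyclicity of the Killing-type form: let `(A, ρ)` be affine Lie
algebroid data over `R` such that `L := ker ρ` is a finite free `R`-module. For `x ∈ L`
let `ad x` denote the `R`-linear endomorphism `y ↦ ⁅x, y⁆` of `L`, and define
`⟨x, y⟩ := Tr(ad x ∘ ad y)`, where `Tr` is the trace of `R`-linear endomorphisms of
`L`. Then for all `a ∈ A` and `x, y ∈ L` one has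
`⟨⁅a,x⁆, y⟩ + ⟨x, ⁅a,y⁆⟩ = ρ a (⟨x, y⟩)`. -/
theorem killing_form_cyclic
    {K R A : Type*} [Field K] [CharZero K] [CommRing R] [Algebra K R]
    [LieRing A] [LieAlgebra K A] [Module R A] [IsScalarTower K R A]
    (ρ : A →ₗ[R] Derivation K R R)
    (hmor : ∀ a b : A, ρ ⁅a, b⁆ = ⁅ρ a, ρ b⁆)
    (hleib : ∀ (a b : A) (f : R), ⁅a, f • b⁆ = f • ⁅a, b⁆ + (ρ a f) • b)
    [Module.Free R (LinearMap.ker ρ)] [Module.Finite R (LinearMap.ker ρ)]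
    (adm : LinearMap.ker ρ → (LinearMap.ker ρ →ₗ[R] LinearMap.ker ρ))
    (hadm : ∀ x y : LinearMap.ker ρ, ((adm x y : LinearMap.ker ρ) : A) = ⁅(x : A), (y : A)⁆)
    (a : A) (x y ax ay : LinearMap.ker ρ)
    (hax : (ax : A) = ⁅a, (x : A)⁆) (hay : (ay : A) = ⁅a, (y : A)⁆) :
    LinearMap.trace R (LinearMap.ker ρ) (adm ax ∘ₗ adm y)
      + LinearMap.trace R (LinearMap.ker ρ) (adm x ∘ₗ adm ay)
      = ρ a (LinearMap.trace R (LinearMap.ker ρ) (adm x ∘ₗ adm y)) :=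
  killing_form_cyclic_general ρ hmor hleib adm hadm a x y ax ay hax hay
end
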